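/- Vanishing of the arc integral of f(z)/z for Hardy class functions (Proposition B.2 of the paper): Let 1 ≤ p < ∞ and let f be of Hardy class from below of order p. Then ∫_{1/r}^{π - 1/r} |f(-r e^{iθ})| dθ → 0 as r → ∞. (This integral equals the integral of |f(z)/z| |dz| over the truncated semicircular arc of radius r in the lower half-plane.) -/

import Mathlib

open MeasureTheory Complex Filter Set

noncomputable section

/-- `f` is of Hardy class from below of order `p`: holomorphic on the open lower
half-plane, each horizontal slice is in `L^p(ℝ)`, with uniformly bounded `L^p` integrals. -/
def HardyBelow (p : ℝ) (f : ℂ → ℂ) : Prop :=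
  (∀ z : ℂ, z.im < 0 → DifferentiableAt ℂ f z) ∧
  (∀ y : ℝ, y < 0 → MemLp (fun x : ℝ => f (x + y * Complex.I)) (ENNReal.ofReal p) volume) ∧
  ∃ C : ℝ, ∀ y : ℝ, y < 0 → (∫ x : ℝ, ‖f (x + y * Complex.I)‖ ^ p) ≤ C

/-- `f₀ ∈ L^p(ℝ)` is the boundary value of `f` from below:
`f (x + iy) → f₀ x` as `y → 0⁻` for a.e. `x`. -/
def IsBoundaryValueBelow (p : ℝ) (f : ℂ → ℂ) (f₀ : ℝ → ℂ) : Prop :=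
  MemLp f₀ (ENNReal.ofReal p) volume ∧
  ∀ᵐ x : ℝ, Filter.Tendsto (fun y : ℝ => f (x + y * Complex.I))
    (nhdsWithin 0 (Set.Iio 0)) (nhds (f₀ x))

/-!
`‖f‖ ^ p` is subharmonic (Cauchy's mean value formula followed by Jensen's inequality), so
`‖f z‖ ^ p` is at most its average over the disc of radius `-Im z / 2` around `z`. That disc lies
in a horizontal strip of width `-Im z` inside the lower half-plane, over which `‖f‖ ^ p` integrates
to at most `-Im z` times the uniform bound `C` on the horizontal `L^p` integrals. Hence
`‖f z‖ ≤ K |Im z| ^ (-1/p)`. On the arc `z = -r e^{iθ}` we have `|Im z| = r sin θ`, and Jordan's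
inequality `sin θ ≥ (2/π) min(θ, π - θ)` bounds the arc integral by `K π r ^ (-1/p) log (π r)`.
-/

open Metric Topology Interval
open Real (circleAverage pi_pos pi_ne_zero)
open scoped Real ENNReal

theorem convexOn_norm_rpow {E : Type*} [NormedAddCommGroup E] [NormedSpace ℝ E] {p : ℝ}
    (hp : 1 ≤ p) : ConvexOn ℝ univ fun x : E => ‖x‖ ^ p := by
  refine ⟨convex_univ, fun x _ y _ a b ha hb hab => ?_⟩
  calc ‖a • x + b • y‖ ^ p ≤ (a * ‖x‖ + b * ‖y‖) ^ p := by
        gcongr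
        refine (norm_add_le _ _).trans_eq ?_
        rw [norm_smul_of_nonneg ha, norm_smul_of_nonneg hb]
    _ ≤ a • ‖x‖ ^ p + b • ‖y‖ ^ p :=
        (convexOn_rpow hp).2 (norm_nonneg x) (norm_nonneg y) ha hb hab

theorem norm_rpow_le_circleAverage {E : Type*} [NormedAddCommGroup E] [NormedSpace ℂ E]
    [CompleteSpace E] {f : ℂ → E} {c : ℂ} {R p : ℝ} (hp : 1 ≤ p)
    (hf : DiffContOnCl ℂ f (ball c |R|)) :
    ‖f c‖ ^ p ≤ circleAverage (fun z => ‖f z‖ ^ p) c R := by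
  rcases eq_or_ne R 0 with rfl | hR
  · simp
  have hcont : ContinuousOn f (sphere c |R|) := by
    refine hf.continuousOn.mono ?_
    rw [closure_ball c (abs_ne_zero.2 hR)]
    exact sphere_subset_closedBall
  have hint : CircleIntegrable f c R := hcont.circleIntegrable'
  have hint' : CircleIntegrable (fun z => ‖f z‖ ^ p) c R :=
    (hcont.norm.rpow_const fun _ _ => Or.inr (by linarith)).circleIntegrable'
  have hvol : volume (Ι (0 : ℝ) (2 * π)) = ENNReal.ofReal (2 * π) := by
    rw [uIoc_of_le (by positivity), Real.volume_Ioc, sub_zero]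
  calc ‖f c‖ ^ p = ‖circleAverage f c R‖ ^ p := by rw [hf.circleAverage]
    _ ≤ circleAverage (fun z => ‖f z‖ ^ p) c R := by
      rw [Real.circleAverage_eq_intervalAverage, Real.circleAverage_eq_intervalAverage]
      exact (convexOn_norm_rpow hp).map_set_average_le
        (continuous_norm.rpow_const fun _ => Or.inr (by linarith)).continuousOn isClosed_univ
        (by simp [hvol, pi_pos]) (by simp [hvol, ENNReal.mul_eq_top]) (by simp)
        hint.def' hint'.def'

theorem setIntegral_Ioo_neg_pi_pi_circleMap {E : Type*} [NormedAddCommGroup E]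
    [NormedSpace ℝ E] (g : ℂ → E) (c : ℂ) (r : ℝ) :
    ∫ θ in Ioo (-π) π, g (circleMap c r θ) = (2 * π) • circleAverage g c r := by
  have hperiodic : (fun θ => g (circleMap c r θ)).Periodic (2 * π) := fun θ => by
    simp only [periodic_circleMap c r θ]
  rw [Real.circleAverage_def, smul_inv_smul₀ (by positivity), ← integral_Ioc_eq_integral_Ioo,
    ← intervalIntegral.integral_of_le (by linarith [pi_pos]),
    ← zero_add (2 * π), hperiodic.intervalIntegral_add_eq 0 (-π)]
  congr 1
  ring

theorem setIntegral_ball_eq_setIntegral_polar {E : Type*} [NormedAddCommGroup E]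
    [NormedSpace ℝ E] (g : ℂ → E) (c : ℂ) (R : ℝ) :
    ∫ z in ball c R, g z =
      ∫ q in Ioo 0 R ×ˢ Ioo (-π) π, q.1 • g (circleMap c q.1 q.2) := by
  have hcircle : ∀ q : ℝ × ℝ, c + Complex.polarCoord.symm q = circleMap c q.1 q.2 := by
    intro q
    rw [Complex.polarCoord_symm_apply, circleMap, Complex.exp_mul_I]
    push_cast
    ring
  have hindicator : ∀ q ∈ polarCoord.target,
      q.1 • (ball c R).indicator g (c + Complex.polarCoord.symm q) =
        (Ioo 0 R ×ˢ univ).indicator (fun q : ℝ × ℝ => q.1 • g (circleMap c q.1 q.2)) q := by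
    rintro ⟨r, θ⟩ ⟨hr, -⟩
    have hdist : dist (circleMap c r θ) c = r := mem_sphere.1 (circleMap_mem_sphere c hr.le θ)
    simp only [hcircle]
    by_cases hrR : r < R
    · rw [indicator_of_mem (by rwa [mem_ball, hdist]),
        indicator_of_mem (show (r, θ) ∈ Ioo 0 R ×ˢ univ from ⟨⟨hr, hrR⟩, mem_univ _⟩)]
    · rw [indicator_of_notMem (by rwa [mem_ball, hdist]), indicator_of_notMem (by simp [hrR]),
        smul_zero]
  calc ∫ z in ball c R, g z = ∫ z, (ball c R).indicator g (c + z) := by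
        rw [integral_add_left_eq_self, integral_indicator measurableSet_ball]
    _ = ∫ q in polarCoord.target, q.1 • (ball c R).indicator g (c + Complex.polarCoord.symm q) :=
        (Complex.integral_comp_polarCoord_symm _).symm
    _ = ∫ q in Ioo 0 R ×ˢ Ioo (-π) π, q.1 • g (circleMap c q.1 q.2) := by
        rw [setIntegral_congr_fun polarCoord.open_target.measurableSet hindicator,
          setIntegral_indicator (measurableSet_Ioo.prod MeasurableSet.univ), polarCoord_target,
          prod_inter_prod, Ioi_inter_Ioo, inter_univ, max_self]

theorem pi_mul_sq_mul_le_setIntegral_ball {g : ℂ → ℝ} {c : ℂ} {R : ℝ} (hR : 0 ≤ R)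
    (hg : ContinuousOn g (closedBall c R))
    (hmean : ∀ r ∈ Ioo 0 R, g c ≤ circleAverage g c r) :
    π * R ^ 2 * g c ≤ ∫ z in ball c R, g z := by
  set G : ℝ × ℝ → ℝ := fun q => q.1 • g (circleMap c q.1 q.2)
  have hG : IntegrableOn G (Ioo 0 R ×ˢ Ioo (-π) π) := by
    refine (ContinuousOn.integrableOn_compact (isCompact_Icc.prod isCompact_Icc) ?_).mono_set
      (prod_mono Ioo_subset_Icc_self Ioo_subset_Icc_self)
    refine continuousOn_fst.smul (hg.comp (by fun_prop) ?_)
    rintro ⟨r, θ⟩ ⟨⟨hr, hrR⟩, -⟩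
    exact closedBall_subset_closedBall hrR (circleMap_mem_closedBall c hr θ)
  rw [Measure.volume_eq_prod, IntegrableOn, ← Measure.prod_restrict] at hG
  have hinner : ∀ r ∈ Ioo 0 R, r * (2 * π) * g c ≤ ∫ θ in Ioo (-π) π, G (r, θ) := by
    intro r hr
    rw [integral_smul, setIntegral_Ioo_neg_pi_pi_circleMap, smul_eq_mul, smul_eq_mul, mul_assoc]
    exact mul_le_mul_of_nonneg_left (mul_le_mul_of_nonneg_left (hmean r hr) (by positivity))
      hr.1.le
  calc π * R ^ 2 * g c = ∫ r in Ioo 0 R, r * (2 * π) * g c := by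
        rw [integral_mul_const, integral_mul_const, ← integral_Ioc_eq_integral_Ioo,
          ← intervalIntegral.integral_of_le hR, integral_id]
        ring
    _ ≤ ∫ r in Ioo 0 R, ∫ θ in Ioo (-π) π, G (r, θ) :=
        setIntegral_mono_on
          ((continuous_id.mul_const _).mul_const _ |>.integrableOn_Icc.mono_set Ioo_subset_Icc_self)
          hG.integral_prod_left measurableSet_Ioo hinner
    _ = ∫ z in ball c R, g z := by
        rw [setIntegral_ball_eq_setIntegral_polar, Measure.volume_eq_prod,
          setIntegral_prod _ (by rwa [IntegrableOn, ← Measure.prod_restrict])]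

theorem DifferentiableOn.pi_mul_sq_mul_norm_rpow_le {E : Type*} [NormedAddCommGroup E]
    [NormedSpace ℂ E] [CompleteSpace E] {f : ℂ → E} {c : ℂ} {R p : ℝ} (hp : 1 ≤ p) (hR : 0 ≤ R)
    (hf : DifferentiableOn ℂ f (closedBall c R)) :
    π * R ^ 2 * ‖f c‖ ^ p ≤ ∫ z in ball c R, ‖f z‖ ^ p := by
  refine pi_mul_sq_mul_le_setIntegral_ball hR
    (hf.continuousOn.norm.rpow_const fun _ _ => Or.inr (by linarith)) fun r hr => ?_
  refine norm_rpow_le_circleAverage hp (hf.mono ?_).diffContOnCl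
  rw [abs_of_pos hr.1]
  exact closure_ball_subset_closedBall.trans (closedBall_subset_closedBall hr.2.le)

theorem dist_im_le_dist (z w : ℂ) : dist z.im w.im ≤ dist z w := by
  simpa [Real.dist_eq, dist_eq] using abs_im_le_norm (z - w)

theorem setLIntegral_im_preimage_le (g : ℂ → ℝ≥0∞) {s : Set ℝ} (hs : MeasurableSet s)
    {M : ℝ≥0∞} (hM : ∀ y ∈ s, ∫⁻ x : ℝ, g (x + y * I) ≤ M) :
    ∫⁻ z in im ⁻¹' s, g z ≤ volume s * M := by
  have hslice : ∀ y : ℝ,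
      ∫⁻ x : ℝ, (im ⁻¹' s).indicator g (x + y * I) ≤ s.indicator (fun _ => M) y := by
    intro y
    by_cases hy : y ∈ s
    · simpa [indicator, hy] using hM y hy
    · simp [indicator, hy]
  calc ∫⁻ z in im ⁻¹' s, g z
      = ∫⁻ q : ℝ × ℝ, (im ⁻¹' s).indicator g (measurableEquivRealProd.symm q) := by
        rw [← lintegral_indicator (measurable_im hs),
          ← (volume_preserving_equiv_real_prod.symm).lintegral_comp_emb
            measurableEquivRealProd.symm.measurableEmbedding]
    -- `lintegral_prod_le` is Tonelli's inequality, which needs no measurability of `g`.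
    _ ≤ ∫⁻ y : ℝ, ∫⁻ x : ℝ, (im ⁻¹' s).indicator g (x + y * I) := by
        rw [Measure.volume_eq_prod, ← lintegral_prod_swap]
        refine (lintegral_prod_le _).trans_eq ?_
        simp [measurableEquivRealProd_symm_apply, mk_eq_add_mul_I]
    _ ≤ ∫⁻ y : ℝ, s.indicator (fun _ => M) y := lintegral_mono hslice
    _ = volume s * M := by rw [lintegral_indicator_const hs, mul_comm]

namespace HardyBelow

variable {p : ℝ} {f : ℂ → ℂ}

theorem exists_lintegral_slice_le (hp : 1 ≤ p) (hf : HardyBelow p f) :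
    ∃ C, 0 ≤ C ∧ ∀ y : ℝ, y < 0 →
      ∫⁻ x : ℝ, ENNReal.ofReal (‖f (x + y * I)‖ ^ p) ≤ ENNReal.ofReal C := by
  obtain ⟨-, hmem, C, hC⟩ := hf
  refine ⟨C, (integral_nonneg fun _ => by positivity).trans (hC (-1) (by norm_num)),
    fun y hy => ?_⟩
  have hint := (hmem y hy).integrable_norm_rpow (ENNReal.ofReal_pos.2 (by linarith)).ne'
    ENNReal.ofReal_ne_top
  rw [ENNReal.toReal_ofReal (by linarith)] at hint
  rw [← ofReal_integral_eq_lintegral_ofReal hint (ae_of_all _ fun _ => by positivity)]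
  exact ENNReal.ofReal_le_ofReal (hC y hy)

theorem exists_norm_rpow_le (hp : 1 ≤ p) (hf : HardyBelow p f) :
    ∃ K, 0 ≤ K ∧ ∀ z : ℂ, z.im < 0 → ‖f z‖ ^ p ≤ K / -z.im := by
  obtain ⟨C, hC0, hC⟩ := hf.exists_lintegral_slice_le hp
  refine ⟨4 * C / π, by positivity, fun z hz => ?_⟩
  set R := -z.im / 2 with hRdef
  have hR : 0 < R := by linarith
  have hdiff : DifferentiableOn ℂ f (closedBall z R) := fun w hw => by
    have := (dist_im_le_dist w z).trans hw
    rw [Real.dist_eq, abs_le] at this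
    exact (hf.1 w (by linarith)).differentiableWithinAt
  have hint : IntegrableOn (fun w => ‖f w‖ ^ p) (ball z R) :=
    ((hdiff.continuousOn.norm.rpow_const fun _ _ => Or.inr (by linarith)).integrableOn_compact
      (isCompact_closedBall z R)).mono_set ball_subset_closedBall
  have hstrip : ball z R ⊆ im ⁻¹' Ioo (z.im - R) (z.im + R) := fun w hw => by
    rw [mem_preimage, ← Real.ball_eq_Ioo]
    exact (dist_im_le_dist w z).trans_lt hw
  have hdisc : ENNReal.ofReal (π * R ^ 2 * ‖f z‖ ^ p) ≤ ENNReal.ofReal (2 * R * C) := calc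
    ENNReal.ofReal (π * R ^ 2 * ‖f z‖ ^ p)
      ≤ ENNReal.ofReal (∫ w in ball z R, ‖f w‖ ^ p) :=
        ENNReal.ofReal_le_ofReal (hdiff.pi_mul_sq_mul_norm_rpow_le hp hR.le)
    _ = ∫⁻ w in ball z R, ENNReal.ofReal (‖f w‖ ^ p) :=
        ofReal_integral_eq_lintegral_ofReal hint (ae_of_all _ fun _ => by positivity)
    _ ≤ ∫⁻ w in im ⁻¹' Ioo (z.im - R) (z.im + R), ENNReal.ofReal (‖f w‖ ^ p) :=
        lintegral_mono_set hstrip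
    _ ≤ volume (Ioo (z.im - R) (z.im + R)) * ENNReal.ofReal C :=
        setLIntegral_im_preimage_le _ measurableSet_Ioo fun y hy =>
          hC y (by linarith [hy.2, hRdef])
    _ = ENNReal.ofReal (2 * R * C) := by
        rw [Real.volume_Ioo, ← ENNReal.ofReal_mul (by linarith)]
        ring_nf
  have hR_bound : π * R * ‖f z‖ ^ p ≤ 2 * C := by
    refine le_of_mul_le_mul_left ?_ hR
    linarith [(ENNReal.ofReal_le_ofReal_iff (by positivity)).1 hdisc]
  rw [le_div_iff₀ (neg_pos.2 hz), le_div_iff₀ pi_pos, show -z.im = 2 * R by ring]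
  linarith

theorem exists_norm_le_mul_rpow (hp : 1 ≤ p) (hf : HardyBelow p f) :
    ∃ K, 0 ≤ K ∧ ∀ z : ℂ, z.im < 0 → ‖f z‖ ≤ K * (-z.im) ^ (-p⁻¹) := by
  obtain ⟨K, hK, hbound⟩ := hf.exists_norm_rpow_le hp
  refine ⟨K ^ p⁻¹, by positivity, fun z hz => ?_⟩
  have him : 0 < -z.im := neg_pos.2 hz
  calc ‖f z‖ = (‖f z‖ ^ p) ^ p⁻¹ := (Real.rpow_rpow_inv (norm_nonneg _) (by linarith)).symm
    _ ≤ (K / -z.im) ^ p⁻¹ := by gcongr; exact hbound z hz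
    _ = K ^ p⁻¹ * (-z.im) ^ (-p⁻¹) := by
        rw [Real.div_rpow hK him.le, Real.rpow_neg him.le, div_eq_mul_inv]

end HardyBelow

theorem Real.inv_sin_le {θ : ℝ} (hθ : θ ∈ Ioo 0 π) :
    (Real.sin θ)⁻¹ ≤ π / 2 * (θ⁻¹ + (π - θ)⁻¹) := by
  have jordan : ∀ t, 0 < t → t ≤ π / 2 → (Real.sin t)⁻¹ ≤ π / 2 * t⁻¹ := fun t ht ht' =>
    calc (Real.sin t)⁻¹ ≤ (2 / π * t)⁻¹ := inv_anti₀ (by positivity) (Real.mul_le_sin ht.le ht')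
      _ = π / 2 * t⁻¹ := by field_simp
  rcases le_total θ (π / 2) with h | h
  · have := jordan θ hθ.1 h
    have : 0 ≤ (π - θ)⁻¹ := inv_nonneg.2 (sub_nonneg.2 hθ.2.le)
    nlinarith [pi_pos]
  · have := jordan (π - θ) (sub_pos.2 hθ.2) (by linarith)
    rw [Real.sin_pi_sub] at this
    have : 0 ≤ θ⁻¹ := inv_nonneg.2 hθ.1.le
    nlinarith [pi_pos]

theorem integral_inv_add_inv_pi_sub {δ : ℝ} (hδ : δ ∈ Ioo 0 π) :
    ∫ θ in δ..π - δ, (θ⁻¹ + (π - θ)⁻¹) = 2 * Real.log ((π - δ) / δ) := by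
  have h0 : (0 : ℝ) ∉ [[δ, π - δ]] := by
    rw [mem_uIcc]; rintro (⟨h, -⟩ | ⟨h, -⟩) <;> linarith [hδ.1, hδ.2]
  have hint : IntervalIntegrable (fun θ : ℝ => θ⁻¹) volume δ (π - δ) :=
    intervalIntegral.intervalIntegrable_inv (fun x hx => ne_of_mem_of_not_mem hx h0)
      continuousOn_id
  have hint' : IntervalIntegrable (fun θ : ℝ => (π - θ)⁻¹) volume δ (π - δ) := by
    simpa using (hint.comp_sub_left π).symm
  rw [intervalIntegral.integral_add hint hint', intervalIntegral.integral_comp_sub_left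
    (fun θ => θ⁻¹), sub_sub_cancel, integral_inv h0]
  ring

theorem tendsto_rpow_neg_mul_log_pi_mul {a : ℝ} (ha : 0 < a) :
    Tendsto (fun r : ℝ => r ^ (-a) * Real.log (π * r)) atTop (𝓝 0) := by
  have h := ((tendsto_rpow_neg_atTop ha).mul_const (Real.log π)).add
    (isLittleO_log_rpow_atTop ha).tendsto_div_nhds_zero
  rw [zero_mul, zero_add] at h
  refine h.congr' ?_
  filter_upwards [eventually_gt_atTop 0] with r hr
  rw [Real.log_mul pi_ne_zero hr.ne', Real.rpow_neg hr.le]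
  ring

section Arc

variable {E : Type*} [NormedAddCommGroup E] {f : ℂ → E} {K a : ℝ}

theorem norm_arc_le (ha : a ≤ 1) (hK : 0 ≤ K)
    (hf : ∀ z : ℂ, z.im < 0 → ‖f z‖ ≤ K * (-z.im) ^ (-a)) {r θ : ℝ} (hr : 0 < r)
    (hθ : θ ∈ Ioo 0 π) :
    ‖f (-(r : ℂ) * exp ((θ : ℂ) * I))‖ ≤ K * r ^ (-a) * (π / 2 * (θ⁻¹ + (π - θ)⁻¹)) := by
  have hsin : 0 < Real.sin θ := Real.sin_pos_of_pos_of_lt_pi hθ.1 hθ.2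
  have him : (-(r : ℂ) * exp ((θ : ℂ) * I)).im = -(r * Real.sin θ) := by
    rw [neg_mul, neg_im, im_ofReal_mul, exp_ofReal_mul_I_im]
  have hsin_rpow : Real.sin θ ^ (-a) ≤ (Real.sin θ)⁻¹ := by
    rw [← Real.rpow_neg_one]
    exact Real.rpow_le_rpow_of_exponent_ge hsin (Real.sin_le_one θ) (neg_le_neg ha)
  calc ‖f (-(r : ℂ) * exp ((θ : ℂ) * I))‖ ≤ K * (r * Real.sin θ) ^ (-a) := by
        have := hf _ (by rw [him]; exact neg_neg_of_pos (by positivity))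
        rwa [him, neg_neg] at this
    _ = K * r ^ (-a) * Real.sin θ ^ (-a) := by rw [Real.mul_rpow hr.le hsin.le, mul_assoc]
    _ ≤ K * r ^ (-a) * (π / 2 * (θ⁻¹ + (π - θ)⁻¹)) := by
        gcongr
        exact hsin_rpow.trans (Real.inv_sin_le hθ)

theorem integral_norm_arc_le (ha : a ≤ 1) (hK : 0 ≤ K)
    (hf : ∀ z : ℂ, z.im < 0 → ‖f z‖ ≤ K * (-z.im) ^ (-a)) {r : ℝ} (hr : 1 ≤ r) :
    ∫ θ in (1 / r)..(π - 1 / r), ‖f (-(r : ℂ) * exp ((θ : ℂ) * I))‖ ≤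
      K * π * (r ^ (-a) * Real.log (π * r)) := by
  have hr0 : 0 < r := by linarith
  have hδ : 1 / r ∈ Ioo 0 π := ⟨by positivity, by
    linarith [(div_le_one hr0).2 hr, Real.pi_gt_three]⟩
  have hle : 1 / r ≤ π - 1 / r := by linarith [(div_le_one hr0).2 hr, Real.pi_gt_three]
  have hbound : IntervalIntegrable (fun θ : ℝ => K * r ^ (-a) * (π / 2 * (θ⁻¹ + (π - θ)⁻¹)))
      volume (1 / r) (π - 1 / r) := by
    refine ContinuousOn.intervalIntegrable ?_
    rw [uIcc_of_le hle]
    refine continuousOn_const.mul (continuousOn_const.mul ((continuousOn_id.inv₀ ?_).add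
      ((continuousOn_const.sub continuousOn_id).inv₀ ?_)))
    · exact fun θ hθ => (hδ.1.trans_le hθ.1).ne'
    · exact fun θ hθ => sub_ne_zero.2 (by linarith [hθ.2, hδ.1] : θ < π).ne'
  have hlog : Real.log ((π - 1 / r) / (1 / r)) ≤ Real.log (π * r) := by
    refine Real.log_le_log (div_pos (by linarith [hδ.2]) hδ.1) ?_
    rw [div_div_eq_mul_div, div_one, sub_mul, one_div_mul_cancel hr0.ne']
    linarith
  calc ∫ θ in (1 / r)..(π - 1 / r), ‖f (-(r : ℂ) * exp ((θ : ℂ) * I))‖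
      ≤ ∫ θ in (1 / r)..(π - 1 / r), K * r ^ (-a) * (π / 2 * (θ⁻¹ + (π - θ)⁻¹)) := by
        -- only the majorant has to be integrable, the integrand being nonnegative
        rw [intervalIntegral.integral_of_le hle, intervalIntegral.integral_of_le hle]
        refine integral_mono_of_nonneg (ae_of_all _ fun _ => norm_nonneg _) hbound.1 ?_
        filter_upwards [ae_restrict_mem measurableSet_Ioc] with θ hθ
        exact norm_arc_le ha hK hf hr0 ⟨hδ.1.trans hθ.1, by linarith [hθ.2, hδ.1]⟩
    _ = K * r ^ (-a) * (π / 2 * (2 * Real.log ((π - 1 / r) / (1 / r)))) := by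
        rw [intervalIntegral.integral_const_mul, intervalIntegral.integral_const_mul,
          integral_inv_add_inv_pi_sub hδ]
    _ = K * r ^ (-a) * π * Real.log ((π - 1 / r) / (1 / r)) := by ring
    _ ≤ K * r ^ (-a) * π * Real.log (π * r) := by gcongr
    _ = K * π * (r ^ (-a) * Real.log (π * r)) := by ring

theorem tendsto_integral_norm_arc (ha : 0 < a) (ha1 : a ≤ 1) (hK : 0 ≤ K)
    (hf : ∀ z : ℂ, z.im < 0 → ‖f z‖ ≤ K * (-z.im) ^ (-a)) :
    Tendsto (fun r : ℝ => ∫ θ in (1 / r)..(π - 1 / r), ‖f (-(r : ℂ) * exp ((θ : ℂ) * I))‖)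
      atTop (𝓝 0) := by
  refine squeeze_zero' ?_ ?_
    (by simpa using (tendsto_rpow_neg_mul_log_pi_mul ha).const_mul (K * π))
  · filter_upwards [eventually_ge_atTop 1] with r hr
    refine intervalIntegral.integral_nonneg ?_ fun _ _ => norm_nonneg _
    linarith [(div_le_one (by linarith : (0 : ℝ) < r)).2 hr, Real.pi_gt_three]
  · filter_upwards [eventually_ge_atTop 1] with r hr
    exact integral_norm_arc_le ha1 hK hf hr

end Arc

/-- Proposition B.2: the integral of `|f|` over the truncated semicircular arc
of radius `r` in the lower half-plane tends to `0` as `r → ∞`. -/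
theorem hardyBelow_arc_integral_tendsto_zero (p : ℝ) (hp : 1 ≤ p) (f : ℂ → ℂ)
    (hf : HardyBelow p f) :
    Filter.Tendsto
      (fun r : ℝ => ∫ θ in (1 / r)..(Real.pi - 1 / r),
        ‖f (-(r : ℂ) * Complex.exp ((θ : ℂ) * Complex.I))‖)
      Filter.atTop (nhds 0) := by
  obtain ⟨K, hK, hbound⟩ := hf.exists_norm_le_mul_rpow hp
  exact tendsto_integral_norm_arc (inv_pos.2 (by linarith)) (inv_le_one_of_one_le₀ hp) hK hbound
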